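/- arXiv:2308.08035 — 4 statements merged into one kernel-verified Lean document; each statement's English description precedes it below -/
import Mathlib

section
/- Let b_1,…,b_d be pairwise coprime integers ≥ 2 and k_1,…,k_d nonnegative integers, and let M = ∏_{j=1}^d b_j^{k_j}. Among any M consecutive nonnegative integers i, exactly one has its Halton point (φ_{b_1}(i),…,φ_{b_d}(i)) in each elementary box ∏_{j=1}^d [r_j/b_j^{k_j}, (r_j+1)/b_j^{k_j}) for r_j ∈ {0,…,b_j^{k_j}−1}. -/
/-!
Let `ρ_k(i) = digitRev b k i` be the number whose base-`b` digits are the lowest `k` digits of `i` in reverse order.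
Then `φ_b(i) = (ρ_k(i) + φ_b(⌊i / b^k⌋)) / b^k` with `0 ≤ φ_b < 1`, so `φ_b(i)` lies in
`[r / b^k, (r + 1) / b^k)` iff `ρ_k(i) = r`, i.e. (as `ρ_k` is an involution on residues mod `b^k`)
iff `i ≡ ρ_k(r) [MOD b^k]`. The box condition is therefore a system of congruences modulo the
pairwise coprime `b_j^{k_j}`, which by the Chinese remainder theorem has exactly one solution among
any `M` consecutive integers.
-/

noncomputable def radInv (b i : ℕ) : ℝ :=
  ∑ ℓ ∈ Finset.range (Nat.digits b i).length,
    ((Nat.digits b i).getD ℓ 0 : ℝ) / (b : ℝ) ^ (ℓ + 1)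

open Finset

theorem Nat.existsUnique_mem_Ico_natCast_eq {n : ℕ} [NeZero n] (s : ℕ) (z : ZMod n) :
    ∃! i : ℕ, i ∈ Ico s (s + n) ∧ (i : ZMod n) = z := by
  refine ⟨s + (z - (s : ZMod n)).val, ⟨?_, ?_⟩, ?_⟩
  · simpa using ZMod.val_lt (z - (s : ZMod n))
  · simp
  · rintro i ⟨hi, hiz⟩
    have hmod : i ≡ s + (z - (s : ZMod n)).val [MOD n] := by
      rw [← ZMod.natCast_eq_natCast_iff]; simp [hiz]
    have hlt := ZMod.val_lt (z - (s : ZMod n))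
    simp only [mem_Ico] at hi
    exact hmod.eq_of_abs_lt (by rw [abs_sub_lt_iff]; omega)

open scoped Function in
theorem Nat.existsUnique_mem_Ico_forall_modEq {ι : Type*} [Fintype ι] {m : ι → ℕ}
    (hm : ∀ j, m j ≠ 0) (hcop : Pairwise (Nat.Coprime on m)) (s : ℕ) (c : ι → ℕ) :
    ∃! i : ℕ, i ∈ Ico s (s + ∏ j, m j) ∧ ∀ j, i ≡ c j [MOD m j] := by
  have : NeZero (∏ j, m j) := ⟨prod_ne_zero_iff.mpr fun j _ => hm j⟩
  let e := ZMod.prodEquivPi m hcop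
  have hcrt : ∀ i : ℕ,
      (∀ j, i ≡ c j [MOD m j]) ↔ (i : ZMod (∏ j, m j)) = e.symm (fun j => c j) := by
    intro i
    rw [RingEquiv.eq_symm_apply, map_natCast, funext_iff]
    simp [ZMod.natCast_eq_natCast_iff]
  simpa only [hcrt] using Nat.existsUnique_mem_Ico_natCast_eq s (e.symm fun j => c j)

def digitRev (b : ℕ) : ℕ → ℕ → ℕ
  | 0, _ => 0
  | k + 1, i => i % b * b ^ k + digitRev b k (i / b)

section digitRev

variable {b : ℕ}

theorem digitRev_lt (hb : 0 < b) : ∀ k i, digitRev b k i < b ^ k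
  | 0, _ => Nat.one_pos
  | k + 1, i => by
    have hlow := digitRev_lt hb k (i / b)
    have hdigit : i % b + 1 ≤ b := Nat.mod_lt i hb
    calc i % b * b ^ k + digitRev b k (i / b) < (i % b + 1) * b ^ k := by nlinarith
      _ ≤ b * b ^ k := Nat.mul_le_mul_right _ hdigit
      _ = b ^ (k + 1) := (pow_succ' b k).symm

theorem digitRev_succ' :
    ∀ k i, digitRev b (k + 1) i = digitRev b k i * b + i / b ^ k % b
  | 0, i => by simp [digitRev]
  | k + 1, i => by
    rw [digitRev, digitRev_succ' k (i / b), Nat.div_div_eq_div_mul, ← pow_succ', digitRev]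
    ring

theorem digitRev_mod_pow (hb : 0 < b) : ∀ k i, digitRev b k (i % b ^ k) = digitRev b k i
  | 0, _ => rfl
  | k + 1, i => by
    have hlow : i % b ^ (k + 1) % b = i % b :=
      Nat.mod_mod_of_dvd _ (dvd_pow_self b k.succ_ne_zero)
    have hhigh : i % b ^ (k + 1) / b = i / b % b ^ k := by
      rw [pow_succ', Nat.mod_mul_right_div_self]
    rw [digitRev, digitRev, hlow, hhigh, digitRev_mod_pow hb k]

theorem digitRev_digitRev (hb : 0 < b) : ∀ k i, digitRev b k (digitRev b k i) = i % b ^ k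
  | 0, i => (Nat.mod_one i).symm
  | k + 1, i => by
    have hlt := digitRev_lt hb k (i / b)
    set n := digitRev b (k + 1) i
    have hn : n = i % b * b ^ k + digitRev b k (i / b) := rfl
    have hn_mod : n % b ^ k = digitRev b k (i / b) := by
      rw [hn, Nat.mul_add_mod_of_lt hlt]
    have hn_div : n / b ^ k = i % b := by
      rw [hn, mul_comm, Nat.mul_add_div (Nat.pow_pos hb), Nat.div_eq_of_lt hlt, add_zero]
    rw [digitRev_succ', ← digitRev_mod_pow hb k n, hn_mod, digitRev_digitRev hb k, hn_div,
      Nat.mod_mod_of_dvd _ (dvd_refl b), pow_succ', Nat.mod_mul]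
    ring

theorem digitRev_eq_iff_modEq (hb : 0 < b) {k i r : ℕ} (hr : r < b ^ k) :
    digitRev b k i = r ↔ i ≡ digitRev b k r [MOD b ^ k] := by
  rw [Nat.ModEq, Nat.mod_eq_of_lt (digitRev_lt hb k r)]
  constructor
  · rintro rfl
    rw [digitRev_digitRev hb]
  · intro h
    rw [← digitRev_mod_pow hb, h, digitRev_digitRev hb, Nat.mod_eq_of_lt hr]

end digitRev

theorem Nat.floor_natCast_add_of_lt_one {t : ℝ} (n : ℕ) (ht₀ : 0 ≤ t) (ht₁ : t < 1) :
    ⌊(n : ℝ) + t⌋₊ = n := by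
  rw [add_comm, Nat.floor_add_natCast ht₀, Nat.floor_eq_zero.mpr ht₁, zero_add]

section radInv

variable {b : ℕ}

theorem radInv_nonneg (i : ℕ) : 0 ≤ radInv b i :=
  sum_nonneg fun _ _ => by positivity

theorem radInv_eq_mod_add_div (hb : 2 ≤ b) (i : ℕ) :
    radInv b i = ((i % b : ℕ) + radInv b (i / b)) / b := by
  rcases Nat.eq_zero_or_pos i with rfl | hi
  · simp [radInv]
  rw [radInv, Nat.digits_def' (by omega) hi, List.length_cons, sum_range_succ',
    radInv, add_div, sum_div, add_comm]
  simp only [List.getD_cons_succ, List.getD_cons_zero, zero_add, pow_one, div_div, ← pow_succ]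

theorem radInv_lt_one (hb : 2 ≤ b) (i : ℕ) : radInv b i < 1 := by
  induction i using Nat.strong_induction_on with
  | _ i ih =>
    rcases Nat.eq_zero_or_pos i with rfl | hi
    · simp [radInv]
    have hdigit : ((i % b : ℕ) : ℝ) + 1 ≤ b := by exact_mod_cast Nat.mod_lt i (by omega)
    have htail := ih (i / b) (Nat.div_lt_self hi (by omega))
    rw [radInv_eq_mod_add_div hb, div_lt_one (by positivity)]
    linarith

theorem radInv_eq_digitRev_add_div_pow (hb : 2 ≤ b) : ∀ k i,
    radInv b i = (digitRev b k i + radInv b (i / b ^ k)) / (b : ℝ) ^ k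
  | 0, i => by simp [digitRev]
  | k + 1, i => by
    rw [radInv_eq_digitRev_add_div_pow hb k i, radInv_eq_mod_add_div hb (i / b ^ k),
      digitRev_succ', Nat.div_div_eq_div_mul, ← pow_succ]
    have : (b : ℝ) ≠ 0 := by positivity
    push_cast
    field_simp
    ring

theorem radInv_mem_Ico_iff (hb : 2 ≤ b) {k i r : ℕ} (hr : r < b ^ k) :
    radInv b i ∈ Set.Ico ((r : ℝ) / (b : ℝ) ^ k) ((r + 1) / (b : ℝ) ^ k) ↔
      i ≡ digitRev b k r [MOD b ^ k] := by
  have hbk : (0 : ℝ) < (b : ℝ) ^ k := by positivity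
  rw [Set.mem_Ico, radInv_eq_digitRev_add_div_pow hb k, div_le_div_iff_of_pos_right hbk,
    div_lt_div_iff_of_pos_right hbk,
    ← Nat.floor_eq_iff (add_nonneg (Nat.cast_nonneg _) (radInv_nonneg _)),
    Nat.floor_natCast_add_of_lt_one _ (radInv_nonneg _) (radInv_lt_one hb _),
    digitRev_eq_iff_modEq (by omega) hr]

end radInv

theorem stmt8_general (d : ℕ) (b k : Fin d → ℕ)
    (hb : ∀ j, 2 ≤ b j)
    (hcop : ∀ i j : Fin d, i ≠ j → Nat.Coprime (b i) (b j))
    (M : ℕ) (hM : M = ∏ j, b j ^ k j)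
    (s : ℕ) (r : Fin d → ℕ) (hr : ∀ j, r j < b j ^ k j) :
    ∃! i : ℕ, i ∈ Finset.Ico s (s + M) ∧
      ∀ j, (r j : ℝ) / (b j : ℝ) ^ k j ≤ radInv (b j) i ∧
        radInv (b j) i < ((r j : ℝ) + 1) / (b j : ℝ) ^ k j := by
  have hbox : ∀ i j, ((r j : ℝ) / (b j : ℝ) ^ k j ≤ radInv (b j) i ∧
      radInv (b j) i < ((r j : ℝ) + 1) / (b j : ℝ) ^ k j) ↔
        i ≡ digitRev (b j) (k j) (r j) [MOD b j ^ k j] :=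
    fun i j => radInv_mem_Ico_iff (hb j) (hr j)
  have hcop_pow : Pairwise fun i j => Nat.Coprime (b i ^ k i) (b j ^ k j) :=
    fun i j hij => (hcop i j hij).pow _ _
  simpa only [hM, hbox] using Nat.existsUnique_mem_Ico_forall_modEq
    (fun j => (pow_pos (by linarith [hb j]) _).ne') hcop_pow s _

theorem stmt8 (d : ℕ) (hd : 1 ≤ d) (b k : Fin d → ℕ)
    (hb : ∀ j, 2 ≤ b j)
    (hcop : ∀ i j : Fin d, i ≠ j → Nat.Coprime (b i) (b j))
    (M : ℕ) (hM : M = ∏ j, b j ^ k j)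
    (s : ℕ) (r : Fin d → ℕ) (hr : ∀ j, r j < b j ^ k j) :
    ∃! i : ℕ, i ∈ Finset.Ico s (s + M) ∧
      ∀ j, (r j : ℝ) / (b j : ℝ) ^ k j ≤ radInv (b j) i ∧
        radInv (b j) i < ((r j : ℝ) + 1) / (b j : ℝ) ^ k j :=
  stmt8_general d b k hb hcop M hM s r hr
end

section
/- For every nonempty u and every k ∈ ℕ₀^u, sup over n ∈ ℕ of G_{u,k}(n) equals sup over n ∈ ℕ of G_{u,0}(n), i.e., the supremum of the gain coefficients over sample sizes does not depend on k. -/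
/-- Number of pairs (i,i') with 0 ≤ i,i' < n and i ≡ i' (mod m). -/
def Cpairs (m n : ℕ) : ℕ :=
  ((Finset.range n ×ˢ Finset.range n).filter fun p => p.1 % m = p.2 % m).card

/-- `m_{u,v,k} = ∏_{j∈v} b_j^{k_j+1} · ∏_{j∈u∖v} b_j^{k_j}`. -/
def mProd (b k : ℕ → ℕ) (u v : Finset ℕ) : ℕ :=
  (∏ j ∈ v, b j ^ (k j + 1)) * ∏ j ∈ u \ v, b j ^ k j

/-- Unnormalized gain `G̃_{u,k}(n) = ∑_{v⊆u} H_{u,v} C(m_{u,v,k}, n)`. -/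
noncomputable def Gt (b k : ℕ → ℕ) (u : Finset ℕ) (n : ℕ) : ℝ :=
  ∑ v ∈ u.powerset,
    (∏ j ∈ v, (b j : ℝ)) * (-1) ^ (u \ v).card * (Cpairs (mProd b k u v) n : ℝ)

/-- Normalized gain coefficient `G_{u,k}(n)`. -/
noncomputable def Gn (b k : ℕ → ℕ) (u : Finset ℕ) (n : ℕ) : ℝ :=
  Gt b k u n / (n * ∏ j ∈ u, ((b j : ℝ) - 1))

/-! Write `B = ∏ j ∈ u, b j ^ k j`, so that every modulus `m_{u,v,k}` is `B * m_{u,v,0}`.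
Splitting `[0, n)`, `n = q * B + r`, into its residue classes mod `B` (`r` of length `q + 1`,
`B - r` of length `q`) gives `C(B m, n) = (B - r) C(m, q) + r C(m, q + 1)`, and by linearity the
same formula for the unnormalised gain. Hence `n G_{u,k}(n)` is a combination of
`q G_{u,0}(q)` and `(q + 1) G_{u,0}(q + 1)` with weights summing to `n`, so every upper bound
of the `G_{u,0}(n)` bounds the `G_{u,k}(n)`; conversely `G_{u,k}(q B) = G_{u,0}(q)`. The two
sets thus have the same upper bounds, hence the same `sSup`, also when they are unbounded. -/

open Finset

theorem csSup_eq_csSup_of_upperBounds_eq {α : Type*} [ConditionallyCompleteLinearOrder α]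
    {s t : Set α} (hs : s.Nonempty) (ht : t.Nonempty) (h : upperBounds s = upperBounds t) :
    sSup s = sSup t := by
  by_cases hbdd : BddAbove s
  · exact (((isLUB_congr h).1 (isLUB_csSup hs hbdd)).csSup_eq ht).symm
  · have hbdd' : ¬BddAbove t := by rwa [BddAbove, ← h]
    rw [csSup_of_not_bddAbove hbdd, csSup_of_not_bddAbove hbdd']

lemma card_filter_range_mod_eq_mod (m n : ℕ) : #{i ∈ range n | i % m = n % m} = n / m := by
  rcases m.eq_zero_or_pos with rfl | hm
  · simp
  · rw [← Nat.count_eq_card_filter_range]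
    convert Nat.count_modEq_card n hm n using 1
    · rfl
    · simp

lemma Cpairs_zero_right (m : ℕ) : Cpairs m 0 = 0 := by simp [Cpairs]

lemma Cpairs_succ (m n : ℕ) : Cpairs m (n + 1) = Cpairs m n + 2 * (n / m) + 1 := by
  have hsum : ∀ N, Cpairs m N =
      ∑ i ∈ range N, ∑ j ∈ range N, if i % m = j % m then 1 else 0 := fun N => by
    rw [Cpairs, card_filter, sum_product]
  have hcol : ∑ j ∈ range n, (if n % m = j % m then 1 else 0) = n / m := by
    simp_rw [eq_comm (a := n % m)]
    rw [sum_boole, Nat.cast_id, card_filter_range_mod_eq_mod]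
  have hrow : ∑ i ∈ range n, (if i % m = n % m then 1 else 0) = n / m := by
    rw [sum_boole, Nat.cast_id, card_filter_range_mod_eq_mod]
  rw [hsum, hsum, sum_range_succ]
  simp only [sum_range_succ, sum_add_distrib, hcol, hrow, if_pos]
  ring

lemma Cpairs_mul_add_succ {B m q r : ℕ} (hr : r < B)
    (h : Cpairs (B * m) (q * B + r) = (B - r) * Cpairs m q + r * Cpairs m (q + 1)) :
    Cpairs (B * m) (q * B + (r + 1)) =
      (B - (r + 1)) * Cpairs m q + (r + 1) * Cpairs m (q + 1) := by
  have hdiv : (q * B + r) / (B * m) = q / m := by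
    rw [← Nat.div_div_eq_div_mul, Nat.add_comm, Nat.add_mul_div_right _ _ (by omega),
      Nat.div_eq_of_lt hr, zero_add]
  obtain ⟨s, rfl⟩ : ∃ s, B = r + 1 + s := ⟨B - (r + 1), by omega⟩
  rw [← add_assoc, Cpairs_succ, h, hdiv, Cpairs_succ m q,
    show r + 1 + s - r = s + 1 by omega, show r + 1 + s - (r + 1) = s by omega]
  ring

theorem Cpairs_mul_add (B m q : ℕ) {r : ℕ} (hr : r ≤ B) :
    Cpairs (B * m) (q * B + r) = (B - r) * Cpairs m q + r * Cpairs m (q + 1) := by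
  have of_base : ∀ q, Cpairs (B * m) (q * B) = B * Cpairs m q →
      ∀ r ≤ B, Cpairs (B * m) (q * B + r) = (B - r) * Cpairs m q + r * Cpairs m (q + 1) := by
    intro q h0 r hr
    induction r with
    | zero => simpa using h0
    | succ r ih => exact Cpairs_mul_add_succ hr (ih (by omega))
  induction q generalizing r with
  | zero => exact of_base 0 (by simp [Cpairs_zero_right]) r hr
  | succ q ih =>
    refine of_base (q + 1) ?_ r hr
    simpa [add_mul] using ih le_rfl

lemma mProd_eq_mul (b k : ℕ → ℕ) {u v : Finset ℕ} (hv : v ⊆ u) :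
    mProd b k u v = (∏ j ∈ u, b j ^ k j) * mProd b (fun _ => 0) u v := by
  simp only [mProd, zero_add, pow_one, pow_zero, prod_const_one, mul_one]
  rw [← prod_sdiff hv, mul_comm, mul_assoc, ← prod_mul_distrib]
  simp_rw [pow_succ]

lemma Gt_zero_right (b k : ℕ → ℕ) (u : Finset ℕ) : Gt b k u 0 = 0 := by
  simp [Gt, Cpairs_zero_right]

theorem Gt_mul_add (b k : ℕ → ℕ) (u : Finset ℕ) (q : ℕ) {r : ℕ}
    (hr : r ≤ ∏ j ∈ u, b j ^ k j) :
    Gt b k u (q * ∏ j ∈ u, b j ^ k j + r) =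
      ((∏ j ∈ u, b j ^ k j : ℕ) - r : ℝ) * Gt b (fun _ => 0) u q +
        r * Gt b (fun _ => 0) u (q + 1) := by
  simp only [Gt, mul_sum, ← sum_add_distrib]
  refine sum_congr rfl fun v hv => ?_
  rw [mProd_eq_mul b k (mem_powerset.1 hv), Cpairs_mul_add _ _ q hr]
  push_cast [Nat.cast_sub hr]
  ring

section Interpolation

variable {f g : ℕ → ℝ} {B : ℕ}

theorem le_mul_of_interpolation (hB : 0 < B)
    (hg : ∀ q r, r ≤ B → g (q * B + r) = (B - r) * f q + r * f (q + 1))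
    {M : ℝ} (hf : ∀ t, f t ≤ M * t) (n : ℕ) : g n ≤ M * n := by
  set q := n / B
  set r := n % B
  have hr : r < B := Nat.mod_lt n hB
  have hn : (n : ℝ) = q * B + r := by exact_mod_cast (Nat.div_add_mod' n B).symm
  have hgn : g n = (B - r) * f q + r * f (q + 1) := by rw [← hg q r hr.le, Nat.div_add_mod']
  rw [hgn, hn]
  have hBr : (0 : ℝ) ≤ B - r := sub_nonneg.2 (by exact_mod_cast hr.le)
  calc (B - r) * f q + r * f (q + 1)
      ≤ (B - r) * (M * q) + r * (M * ↑(q + 1)) := by gcongr <;> apply hf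
    _ = M * (q * B + r) := by push_cast; ring

theorem sSup_div_eq_of_interpolation (hB : 0 < B) (hf0 : f 0 = 0)
    (hg : ∀ q r, r ≤ B → g (q * B + r) = (B - r) * f q + r * f (q + 1)) :
    sSup {x | ∃ n : ℕ, 1 ≤ n ∧ x = g n / n} = sSup {x | ∃ n : ℕ, 1 ≤ n ∧ x = f n / n} := by
  have hBR : (0 : ℝ) < B := by exact_mod_cast hB
  have hfg : ∀ n : ℕ, f n / n = g (n * B) / ↑(n * B) := fun n => by
    rw [← add_zero (n * B), hg n 0 (Nat.zero_le B)]
    push_cast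
    rw [sub_zero, zero_mul, add_zero, add_zero, mul_comm (B : ℝ), mul_div_mul_right _ _ hBR.ne']
  refine csSup_eq_csSup_of_upperBounds_eq ⟨_, 1, le_rfl, rfl⟩ ⟨_, 1, le_rfl, rfl⟩ ?_
  ext M
  constructor
  · rintro h _ ⟨n, hn, rfl⟩
    exact hfg n ▸ h ⟨n * B, Nat.one_le_iff_ne_zero.2 (by positivity), rfl⟩
  · rintro h _ ⟨n, hn, rfl⟩
    have hf : ∀ t, f t ≤ M * t := fun t => by
      rcases t.eq_zero_or_pos with rfl | ht
      · simp [hf0]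
      · exact (div_le_iff₀ (by exact_mod_cast ht)).1 (h ⟨t, ht, rfl⟩)
    exact (div_le_iff₀ (by exact_mod_cast hn)).2 (le_mul_of_interpolation hB hg hf n)

end Interpolation

theorem stmt13_general (u : Finset ℕ) (b k : ℕ → ℕ)
    (hb : ∀ j ∈ u, 2 ≤ b j) :
    sSup {x : ℝ | ∃ n : ℕ, 1 ≤ n ∧ x = Gn b k u n} =
      sSup {x : ℝ | ∃ n : ℕ, 1 ≤ n ∧ x = Gn b (fun _ => 0) u n} := by
  set P := ∏ j ∈ u, ((b j : ℝ) - 1)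
  have hGn : ∀ k n, Gn b k u n = Gt b k u n / P / n := fun k n => by
    rw [Gn, div_div, mul_comm]
  simp only [hGn]
  refine sSup_div_eq_of_interpolation (B := ∏ j ∈ u, b j ^ k j)
    (prod_pos fun j hj => pow_pos (by linarith [hb j hj]) _)
    (by rw [Gt_zero_right, zero_div]) fun q r hr => ?_
  rw [Gt_mul_add b k u q hr]
  ring

theorem stmt13 (u : Finset ℕ) (hu : u.Nonempty) (b k : ℕ → ℕ)
    (hb : ∀ j ∈ u, 2 ≤ b j)
    (hcop : ∀ i ∈ u, ∀ j ∈ u, i ≠ j → Nat.Coprime (b i) (b j)) :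
    sSup {x : ℝ | ∃ n : ℕ, 1 ≤ n ∧ x = Gn b k u n} =
      sSup {x : ℝ | ∃ n : ℕ, 1 ≤ n ∧ x = Gn b (fun _ => 0) u n} :=
  stmt13_general u b k hb
end

section
/- Let u = v ∪ {j*} with j* ∉ v, v nonempty. Then for n divisible by b_{j*}: G̃_{u,0}(n) = b_{j*}²·G̃_{v,0}(n/b_{j*}) − G̃_{v,0}(n), and after normalization G_{u,0}(n) = (b_{j*}/(b_{j*}−1))·G_{v,0}(n/b_{j*}) − (1/(b_{j*}−1))·G_{v,0}(n). -/
/-!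
Since `n` is a multiple of `b = b_{j*}`, writing `i = b a + r` with `r < b` identifies the pairs
counted by `C(b m, n)` with `b` copies of those counted by `C(m, n / b)`. Splitting the sum over
`s ⊆ v ∪ {j*}` according to whether `j* ∈ s`, the terms with `j* ∉ s` give `-G̃_v(n)` (one more
element in the complement flips the sign) and those with `j* ∈ s` give `b² G̃_v(n / b)`. The
normalized identity is the same equation divided by `n ∏_{j ∈ u} (b_j - 1)`.
-/

open Finset

theorem Nat.mod_mul_eq_mod_mul_iff {b m i j : ℕ} :
    i % (b * m) = j % (b * m) ↔ i % b = j % b ∧ i / b % m = j / b % m := by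
  refine ⟨fun h => ⟨?_, ?_⟩, fun ⟨hmod, hdiv⟩ => by rw [Nat.mod_mul, Nat.mod_mul, hmod, hdiv]⟩
  · rw [← Nat.mod_mod_of_dvd i (Dvd.intro m rfl), h, Nat.mod_mod_of_dvd j (Dvd.intro m rfl)]
  · rw [← Nat.mod_mul_right_div_self, h, Nat.mod_mul_right_div_self]

theorem Cpairs_mul_left {b m n : ℕ} (h : b ∣ n) : Cpairs (b * m) n = b * Cpairs m (n / b) := by
  rcases b.eq_zero_or_pos with rfl | hb
  · obtain rfl : n = 0 := zero_dvd_iff.mp h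
    simp [Cpairs]
  obtain ⟨q, rfl⟩ := h
  rw [Nat.mul_div_cancel_left q hb, Cpairs, Cpairs, ← card_range b, ← card_product, card_range]
  apply card_nbij' (fun p => (p.1 % b, p.1 / b, p.2 / b))
    (fun p => (b * p.2.1 + p.1, b * p.2.2 + p.1))
  · rintro ⟨i, j⟩ hij
    simp only [mem_coe, mem_filter, mem_product, mem_range, Nat.mod_mul_eq_mod_mul_iff] at hij ⊢
    obtain ⟨⟨hi, hj⟩, -, hdiv⟩ := hij
    exact ⟨Nat.mod_lt i hb, ⟨Nat.div_lt_of_lt_mul hi, Nat.div_lt_of_lt_mul hj⟩, hdiv⟩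
  · rintro ⟨r, a, a'⟩ h
    simp only [mem_coe, mem_filter, mem_product, mem_range, Nat.mod_mul_eq_mod_mul_iff] at h ⊢
    obtain ⟨hr, ⟨ha, ha'⟩, hmod⟩ := h
    simp only [Nat.mul_add_mod, Nat.mul_add_div hb, Nat.div_eq_of_lt hr, add_zero, true_and]
    exact ⟨⟨by nlinarith, by nlinarith⟩, hmod⟩
  · rintro ⟨i, j⟩ hij
    simp only [mem_coe, mem_filter, Nat.mod_mul_eq_mod_mul_iff] at hij
    simp only [Prod.mk.injEq]
    exact ⟨Nat.div_add_mod i b, hij.2.1 ▸ Nat.div_add_mod j b⟩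
  · rintro ⟨r, a, a'⟩ h
    simp only [mem_coe, mem_product, mem_range] at h
    simp [Nat.mod_eq_of_lt h.1, Nat.mul_add_div hb, Nat.div_eq_of_lt h.1]

theorem mProd_zero (b : ℕ → ℕ) (u s : Finset ℕ) : mProd b (fun _ => 0) u s = ∏ j ∈ s, b j := by
  simp [mProd]

theorem Gt_zero_insert {b : ℕ → ℕ} {v : Finset ℕ} {jstar n : ℕ} (hjv : jstar ∉ v)
    (hdvd : b jstar ∣ n) :
    Gt b (fun _ => 0) (insert jstar v) n =
      (b jstar : ℝ) ^ 2 * Gt b (fun _ => 0) v (n / b jstar) - Gt b (fun _ => 0) v n := by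
  have without_jstar : ∀ s ∈ v.powerset, (insert jstar v \ s).card = (v \ s).card + 1 := by
    intro s hs
    have hjs : jstar ∉ s := fun h => hjv (mem_powerset.mp hs h)
    rw [insert_sdiff_of_notMem _ hjs, card_insert_of_notMem fun h => hjv (mem_sdiff.mp h).1]
  have with_jstar : ∀ s ∈ v.powerset, insert jstar v \ insert jstar s = v \ s := fun s _ => by
    rw [insert_sdiff_insert, sdiff_insert_of_notMem hjv]
  simp only [Gt, mProd_zero]
  rw [sum_powerset_insert hjv, mul_sum, sub_eq_neg_add, ← sum_neg_distrib]
  congr 1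
  · refine sum_congr rfl fun s hs => ?_
    rw [without_jstar s hs]
    ring
  · refine sum_congr rfl fun s hs => ?_
    have hjs : jstar ∉ s := fun h => hjv (mem_powerset.mp hs h)
    rw [with_jstar s hs, prod_insert hjs, prod_insert hjs, Cpairs_mul_left hdvd]
    push_cast
    ring

theorem stmt14_general (v : Finset ℕ) (b : ℕ → ℕ) (jstar : ℕ)
    (hjv : jstar ∉ v) (u : Finset ℕ) (hu : u = insert jstar v)
    (n : ℕ) (hdvd : b jstar ∣ n) :
    Gt b (fun _ => 0) u n =
        (b jstar : ℝ) ^ 2 * Gt b (fun _ => 0) v (n / b jstar) - Gt b (fun _ => 0) v n ∧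
      Gn b (fun _ => 0) u n =
        ((b jstar : ℝ) / ((b jstar : ℝ) - 1)) * Gn b (fun _ => 0) v (n / b jstar)
          - (1 / ((b jstar : ℝ) - 1)) * Gn b (fun _ => 0) v n := by
  subst hu
  have hGt := Gt_zero_insert hjv hdvd
  refine ⟨hGt, ?_⟩
  -- `(n / b)⁻¹ = b * n⁻¹` holds even when a factor vanishes, so in inverses this is a ring identity
  rw [Gn, Gn, Gn, prod_insert hjv, hGt, Nat.cast_div_charZero hdvd]
  simp only [div_eq_mul_inv, mul_inv, inv_inv]
  ring

theorem stmt14 (v : Finset ℕ) (hv : v.Nonempty) (b : ℕ → ℕ) (jstar : ℕ)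
    (hjv : jstar ∉ v) (u : Finset ℕ) (hu : u = insert jstar v)
    (hb : ∀ j ∈ u, 2 ≤ b j)
    (hcop : ∀ i ∈ u, ∀ j ∈ u, i ≠ j → Nat.Coprime (b i) (b j))
    (n : ℕ) (hn : 1 ≤ n) (hdvd : b jstar ∣ n) :
    Gt b (fun _ => 0) u n =
        (b jstar : ℝ) ^ 2 * Gt b (fun _ => 0) v (n / b jstar) - Gt b (fun _ => 0) v n ∧
      Gn b (fun _ => 0) u n =
        ((b jstar : ℝ) / ((b jstar : ℝ) - 1)) * Gn b (fun _ => 0) v (n / b jstar)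
          - (1 / ((b jstar : ℝ) - 1)) * Gn b (fun _ => 0) v n :=
  stmt14_general v b jstar hjv u hu n hdvd
end

section
/- Let u ⊆ {1,…,d} be nonempty with b_j the j-th prime, and suppose 1 ∈ u or 2 ∈ u (i.e., the base 2 or 3 is used). Fix j* ∈ u with b_{j*} ∈ {2,3} and set n* = ∏_{j∈u, j≠j*} b_j. Then G_{u,0}(n*) = ∏_{j∈u, j≠j*} (b_j + 1)/b_j, and hence sup_{n≥1} G_{u,0}(n) ≥ ∏_{j∈u, j≠j*} (b_j + 1)/b_j. -/
open Finset

theorem Cpairs_eq_sum_sq (m n : ℕ) (hm : 0 < m) :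
    Cpairs m n = ∑ c ∈ range m, #{i ∈ range n | i % m = c} ^ 2 := by
  rw [Cpairs, card_eq_sum_card_fiberwise (f := fun p => p.1 % m) (t := range m)
    (fun p _ => mem_range.2 (Nat.mod_lt _ hm))]
  refine sum_congr rfl fun c _ => ?_
  rw [sq, ← card_product, filter_filter]
  congr 1
  ext ⟨i, j⟩
  simp only [mem_filter, mem_product]
  constructor
  · rintro ⟨⟨hi, hj⟩, hij, rfl⟩; exact ⟨⟨hi, rfl⟩, hj, hij.symm⟩
  · rintro ⟨⟨hi, rfl⟩, hj, hij⟩; exact ⟨⟨hi, hj⟩, hij.symm, rfl⟩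

theorem card_filter_range_mod_eq (m n c : ℕ) (hm : 0 < m) (hc : c < m) :
    #{i ∈ range n | i % m = c} = n / m + if c < n % m then 1 else 0 := by
  have h := Nat.count_modEq_card n hm c
  rw [Nat.count_eq_card_filter_range, Nat.mod_eq_of_lt hc] at h
  simpa only [Nat.ModEq, Nat.mod_eq_of_lt hc] using h

def modDefect (m n : ℕ) : ℕ := n % m * (m - n % m)

theorem mul_Cpairs (m n : ℕ) (hm : 0 < m) :
    m * Cpairs m n = n ^ 2 + modDefect m n := by
  have hsq : ∀ c, (n / m + if c < n % m then 1 else 0) ^ 2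
      = (n / m) ^ 2 + (2 * (n / m) + 1) * if c < n % m then 1 else 0 := by
    intro c; split_ifs <;> ring
  have hsum : ∑ c ∈ range m, (if c < n % m then 1 else 0) = n % m := by
    rw [sum_boole, Nat.cast_id, show {c ∈ range m | c < n % m} = range (n % m) by
      ext; simp only [mem_filter, mem_range]; have := Nat.mod_lt n hm; omega, card_range]
  rw [Cpairs_eq_sum_sq m n hm, sum_congr rfl fun c hc =>
    by rw [card_filter_range_mod_eq m n c hm (mem_range.1 hc), hsq], sum_add_distrib,
    ← mul_sum, hsum, sum_const, card_range, smul_eq_mul]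
  have hr := Nat.mod_lt n hm
  rw [modDefect, ← Nat.div_add_mod n m, Nat.mul_add_div hm, Nat.mul_add_mod]
  generalize n / m = q, n % m = r at *
  obtain ⟨t, rfl⟩ := Nat.exists_eq_add_of_lt hr
  simp only [Nat.div_eq_of_lt hr, Nat.mod_eq_of_lt hr]
  rw [add_assoc, Nat.add_sub_cancel_left]
  ring

theorem modDefect_eq_zero_of_dvd {m n : ℕ} (h : m ∣ n) : modDefect m n = 0 := by
  simp [modDefect, Nat.mod_eq_zero_of_dvd h]

theorem modDefect_mul_mul (g m n : ℕ) : modDefect (g * m) (g * n) = g ^ 2 * modDefect m n := by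
  rw [modDefect, modDefect, Nat.mul_mod_mul_left, ← Nat.mul_sub]
  ring

theorem modDefect_of_le_three {m n : ℕ} (hm : m ≤ 3) (hn : ¬ m ∣ n) : modDefect m n = m - 1 := by
  rw [Nat.dvd_iff_mod_eq_zero] at hn
  rcases m.eq_zero_or_pos with rfl | hm
  · simp [modDefect]
  · have hr := Nat.mod_lt n hm
    rw [modDefect]
    generalize n % m = r at *
    interval_cases m <;> interval_cases r <;> simp_all

theorem modDefect_le_sq (m n : ℕ) : modDefect m n ≤ m ^ 2 := by
  rcases m.eq_zero_or_pos with rfl | hm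
  · simp [modDefect]
  · exact sq m ▸ Nat.mul_le_mul (Nat.mod_lt n hm).le (Nat.sub_le m _)

theorem sum_powerset_neg_one_pow_card_sdiff_mul_prod {ι R : Type*} [DecidableEq ι] [CommRing R]
    (s : Finset ι) (f : ι → R) :
    ∑ t ∈ s.powerset, (-1) ^ #(s \ t) * ∏ i ∈ t, f i = ∏ i ∈ s, (f i - 1) := by
  simp_rw [sub_eq_add_neg, prod_add, prod_const, mul_comm]

theorem Gt_zero_eq_sum_modDefect {b : ℕ → ℕ} {u : Finset ℕ} (hu : u.Nonempty)
    (hb : ∀ j ∈ u, 0 < b j) (n : ℕ) :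
    Gt b (fun _ => 0) u n =
      ∑ v ∈ u.powerset, (-1) ^ #(u \ v) * (modDefect (∏ j ∈ v, b j) n : ℝ) := by
  have hterm : ∀ v ∈ u.powerset, (∏ j ∈ v, (b j : ℝ)) * (-1) ^ #(u \ v) *
      (Cpairs (mProd b (fun _ => 0) u v) n : ℝ) =
        (-1) ^ #(u \ v) * (n : ℝ) ^ 2 + (-1) ^ #(u \ v) * (modDefect (∏ j ∈ v, b j) n : ℝ) := by
    intro v hv
    have hM : 0 < ∏ j ∈ v, b j := prod_pos fun j hj => hb j (mem_powerset.1 hv hj)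
    have hC := congrArg (Nat.cast (R := ℝ)) (mul_Cpairs _ n hM)
    rw [Nat.cast_mul, Nat.cast_add, Nat.cast_pow, Nat.cast_prod] at hC
    simp only [mProd, zero_add, pow_one, pow_zero, prod_const_one, mul_one]
    linear_combination (-1 : ℝ) ^ #(u \ v) * hC
  have hsigns : ∑ v ∈ u.powerset, (-1 : ℝ) ^ #(u \ v) = 0 := by
    simpa [zero_pow hu.card_pos.ne'] using sum_powerset_neg_one_pow_card_sdiff_mul_prod u
      (fun _ => (1 : ℝ))
  rw [Gt, sum_congr rfl hterm, sum_add_distrib, ← sum_mul, hsigns, zero_mul, zero_add]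

theorem Gt_zero_insert_at_prod {b : ℕ → ℕ} {a : ℕ} {w : Finset ℕ} (ha : a ∉ w)
    (hb : ∀ j ∈ insert a w, 0 < b j) (h3 : b a ≤ 3)
    (hdvd : ¬ b a ∣ ∏ j ∈ w, b j) :
    Gt b (fun _ => 0) (insert a w) (∏ j ∈ w, b j) =
      ((b a : ℝ) - 1) * ∏ j ∈ w, ((b j : ℝ) ^ 2 - 1) := by
  have hwithout : ∀ v ∈ w.powerset, modDefect (∏ j ∈ v, b j) (∏ j ∈ w, b j) = 0 := fun v hv =>
    modDefect_eq_zero_of_dvd (prod_dvd_prod_of_subset v w b (mem_powerset.1 hv))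
  have hwith : ∀ v ∈ w.powerset, modDefect (∏ j ∈ insert a v, b j) (∏ j ∈ w, b j) =
      (∏ j ∈ v, b j) ^ 2 * (b a - 1) := by
    intro v hv
    have hvw := mem_powerset.1 hv
    have hq : ¬ b a ∣ ∏ j ∈ w \ v, b j := fun h =>
      hdvd (h.trans (prod_dvd_prod_of_subset _ _ b sdiff_subset))
    rw [prod_insert fun h => ha (hvw h), ← prod_sdiff hvw, mul_comm (b a),
      mul_comm _ (∏ j ∈ v, b j), modDefect_mul_mul, modDefect_of_le_three h3 hq]
  have hba : 1 ≤ b a := hb a (mem_insert_self a w)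
  rw [Gt_zero_eq_sum_modDefect (insert_nonempty a w) hb, sum_powerset_insert ha,
    sum_eq_zero fun v hv => by rw [hwithout v hv, Nat.cast_zero, mul_zero], zero_add,
    ← sum_powerset_neg_one_pow_card_sdiff_mul_prod, mul_sum]
  refine sum_congr rfl fun v hv => ?_
  rw [hwith v hv, insert_sdiff_insert, sdiff_insert_of_notMem ha, Nat.cast_mul, Nat.cast_pow,
    Nat.cast_prod, Nat.cast_sub hba, Nat.cast_one, prod_pow]
  ring

theorem Gn_zero_insert_at_prod {b : ℕ → ℕ} {a : ℕ} {w : Finset ℕ} (ha : a ∉ w)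
    (hb : ∀ j ∈ insert a w, 1 < b j) (h3 : b a ≤ 3)
    (hdvd : ¬ b a ∣ ∏ j ∈ w, b j) :
    Gn b (fun _ => 0) (insert a w) (∏ j ∈ w, b j) = ∏ j ∈ w, ((b j : ℝ) + 1) / (b j : ℝ) := by
  have hb' : ∀ j ∈ insert a w, (1 : ℝ) < b j := fun j hj => by exact_mod_cast hb j hj
  have hw : ∀ j ∈ w, j ∈ insert a w := fun j => mem_insert_of_mem
  have hba : (b a : ℝ) - 1 ≠ 0 := (sub_pos.2 (hb' a (mem_insert_self a w))).ne'
  have hprod : ∏ j ∈ w, (b j : ℝ) ≠ 0 :=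
    prod_ne_zero_iff.2 fun j hj => (zero_lt_one.trans (hb' j (hw j hj))).ne'
  have hprod' : ∏ j ∈ w, ((b j : ℝ) - 1) ≠ 0 :=
    prod_ne_zero_iff.2 fun j hj => (sub_pos.2 (hb' j (hw j hj))).ne'
  have hsq : ∏ j ∈ w, ((b j : ℝ) ^ 2 - 1) =
      (∏ j ∈ w, ((b j : ℝ) + 1)) * ∏ j ∈ w, ((b j : ℝ) - 1) := by
    rw [← prod_mul_distrib]
    exact prod_congr rfl fun j _ => by ring
  rw [Gn, Gt_zero_insert_at_prod ha (fun j hj => (hb j hj).le) h3 hdvd, prod_insert ha,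
    Nat.cast_prod, prod_div_distrib, hsq]
  field_simp

theorem abs_Gt_zero_le {b : ℕ → ℕ} {u : Finset ℕ} (hu : u.Nonempty) (hb : ∀ j ∈ u, 0 < b j)
    (n : ℕ) : |Gt b (fun _ => 0) u n| ≤ ∑ v ∈ u.powerset, ((∏ j ∈ v, b j : ℕ) : ℝ) ^ 2 := by
  rw [Gt_zero_eq_sum_modDefect hu hb]
  refine (abs_sum_le_sum_abs _ _).trans (sum_le_sum fun v _ => ?_)
  rw [abs_mul, abs_pow, abs_neg, abs_one, one_pow, one_mul, Nat.abs_cast]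
  exact_mod_cast modDefect_le_sq _ n

theorem bddAbove_range_Gn_zero {b : ℕ → ℕ} {u : Finset ℕ} (hu : u.Nonempty)
    (hb : ∀ j ∈ u, 0 < b j) : BddAbove (Set.range (Gn b (fun _ => 0) u)) := by
  set C := ∑ v ∈ u.powerset, ((∏ j ∈ v, b j : ℕ) : ℝ) ^ 2
  set D := |∏ j ∈ u, ((b j : ℝ) - 1)|
  refine ⟨C / D, ?_⟩
  rintro _ ⟨n, rfl⟩
  rcases n.eq_zero_or_pos with rfl | hn
  · simp only [Gn, Nat.cast_zero, zero_mul, div_zero]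
    positivity
  calc Gn b (fun _ => 0) u n ≤ |Gn b (fun _ => 0) u n| := le_abs_self _
    _ = |Gt b (fun _ => 0) u n| / D / n := by
        rw [Gn, abs_div, abs_mul, Nat.abs_cast, div_div, mul_comm]
    _ ≤ |Gt b (fun _ => 0) u n| / D := div_le_self (by positivity) (by exact_mod_cast hn)
    _ ≤ C / D := div_le_div_of_nonneg_right (abs_Gt_zero_le hu hb n) (abs_nonneg _)

theorem stmt18_general (d : ℕ) (u : Finset ℕ)
    (hud : u ⊆ Finset.Icc 1 d)
    (b : ℕ → ℕ) (hbp : ∀ j, 1 ≤ j → b j = Nat.nth Nat.Prime (j - 1))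
    (jstar : ℕ) (hjstar : jstar ∈ u) (hj23 : b jstar = 2 ∨ b jstar = 3)
    (nstar : ℕ) (hnstar : nstar = ∏ j ∈ u.erase jstar, b j) :
    Gn b (fun _ => 0) u nstar = ∏ j ∈ u.erase jstar, ((b j : ℝ) + 1) / (b j : ℝ) ∧
      (∏ j ∈ u.erase jstar, ((b j : ℝ) + 1) / (b j : ℝ)) ≤
        sSup {x : ℝ | ∃ n : ℕ, 1 ≤ n ∧ x = Gn b (fun _ => 0) u n} := by
  have hone : ∀ j ∈ u, 1 ≤ j := fun j hj => (mem_Icc.1 (hud hj)).1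
  have hprime : ∀ j ∈ u, (b j).Prime := fun j hj => hbp j (hone j hj) ▸ Nat.prime_nth_prime _
  have hndvd : ¬ b jstar ∣ ∏ j ∈ u.erase jstar, b j := by
    rw [(hprime jstar hjstar).prime.dvd_finsetProd_iff]
    rintro ⟨j, hj, hdvd⟩
    obtain ⟨hne, hju⟩ := mem_erase.1 hj
    rw [Nat.prime_dvd_prime_iff_eq (hprime _ hjstar) (hprime _ hju), hbp _ (hone _ hjstar),
      hbp _ (hone _ hju)] at hdvd
    exact hne (Nat.sub_one_cancel (hone _ hju) (hone _ hjstar)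
      (Nat.nth_injective Nat.infinite_setOfPred_prime hdvd).symm)
  have hval : Gn b (fun _ => 0) u nstar = ∏ j ∈ u.erase jstar, ((b j : ℝ) + 1) / (b j : ℝ) := by
    have h := Gn_zero_insert_at_prod (notMem_erase jstar u)
      (by simpa only [insert_erase hjstar] using fun j hj => (hprime j hj).one_lt) (by omega) hndvd
    rwa [insert_erase hjstar, ← hnstar] at h
  have hnstar_pos : 1 ≤ nstar :=
    hnstar ▸ prod_pos fun j hj => (hprime j (mem_of_mem_erase hj)).pos
  refine ⟨hval, le_csSup ?_ ⟨nstar, hnstar_pos, hval.symm⟩⟩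
  refine (bddAbove_range_Gn_zero ⟨jstar, hjstar⟩ fun j hj => (hprime j hj).pos).mono ?_
  rintro _ ⟨n, -, rfl⟩
  exact ⟨n, rfl⟩

theorem stmt18 (d : ℕ) (u : Finset ℕ) (hu : u.Nonempty)
    (hud : u ⊆ Finset.Icc 1 d)
    (b : ℕ → ℕ) (hbp : ∀ j, 1 ≤ j → b j = Nat.nth Nat.Prime (j - 1))
    (jstar : ℕ) (hjstar : jstar ∈ u) (hj23 : b jstar = 2 ∨ b jstar = 3)
    (nstar : ℕ) (hnstar : nstar = ∏ j ∈ u.erase jstar, b j) :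
    Gn b (fun _ => 0) u nstar = ∏ j ∈ u.erase jstar, ((b j : ℝ) + 1) / (b j : ℝ) ∧
      (∏ j ∈ u.erase jstar, ((b j : ℝ) + 1) / (b j : ℝ)) ≤
        sSup {x : ℝ | ∃ n : ℕ, 1 ≤ n ∧ x = Gn b (fun _ => 0) u n} :=
  stmt18_general d u hud b hbp jstar hjstar hj23 nstar hnstar
end
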